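/- For a homeomorphism f of a compact metric space X the following are equivalent: (1) f is dw-expansive with central dimension D = 0; (2) f is partially expansive with central dimension D = 0; (3) f is cw-expansive. -/

import Mathlib

open Metric Set

variable {X : Type*} [MetricSpace X]

/-- mesh of a family of sets is < ε -/
def MeshLT (𝒰 : Set (Set X)) (ε : ℝ) : Prop := ∀ A ∈ 𝒰, Metric.diam A < ε

/-- the order of a family of sets is ≤ n : every subfamily with more than n+1
elements has empty intersection -/
def OrdLE (𝒰 : Set (Set X)) (n : ℕ) : Prop :=
  ∀ 𝒱 : Finset (Set X), ↑𝒱 ⊆ 𝒰 → n + 1 < 𝒱.card → ⋂₀ (𝒱 : Set (Set X)) = ∅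

/-- the ε-dimension of Y is ≤ n -/
def DimEpsLE (Y : Set X) (ε : ℝ) (n : ℕ) : Prop :=
  ∃ 𝒰 : Set (Set X), (∀ A ∈ 𝒰, IsOpen A) ∧ Y ⊆ ⋃₀ 𝒰 ∧ MeshLT 𝒰 ε ∧ OrdLE 𝒰 n

/-- the ε-dimension of Y, as an extended natural number -/
noncomputable def dimEps (Y : Set X) (ε : ℝ) : ℕ∞ :=
  sInf {d : ℕ∞ | ∃ n : ℕ, d = n ∧ DimEpsLE Y ε n}

/-- the topological (covering) dimension of Y, as lim_{ε→0} dim_ε Y -/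
noncomputable def topDim (Y : Set X) : ℕ∞ :=
  ⨆ (ε : ℝ) (_ : 0 < ε), dimEps Y ε

/-- dim Y > D, for an integer D ≥ -1 (nonempty sets have dimension ≥ 0 > -1) -/
def DimGT (Y : Set X) (D : ℤ) : Prop := D < 0 ∨ ((D.toNat : ℕ∞) < topDim Y)

/-- the n-th iterate (n ∈ ℤ) of a homeomorphism -/
def hiter (f : X ≃ₜ X) (n : ℤ) : X → X := ⇑(f.toEquiv ^ n)

/-- partially expansive with central dimension D and expansive constant ε -/
def PartiallyExpansive (f : X ≃ₜ X) (D : ℤ) (ε : ℝ) : Prop :=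
  ∀ C : Set X, IsCompact C → C.Nontrivial → DimGT C D →
    ∃ k : ℤ, ε ≤ Metric.diam (hiter f k '' C)
/-- f is dw-expansive with central dimension D and dw-expansive constant σ -/
def DwExpansive {X : Type*} [MetricSpace X] (f : X ≃ₜ X) (D : ℕ) (σ : ℝ) : Prop :=
  ∀ C : Set X, IsCompact C → (D : ℕ∞) < topDim C →
    ∃ n : ℤ, (D : ℕ∞) < dimEps (hiter f n '' C) σ

/-- f is continuum-wise expansive with cw-expansive constant δ -/
def CwExpansiveWith {X : Type*} [MetricSpace X] (f : X ≃ₜ X) (δ : ℝ) : Prop :=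
  ∀ C : Set X, IsCompact C → IsConnected C →
    (∀ n : ℤ, Metric.diam (hiter f n '' C) < δ) → ∃ x : X, C = {x}

/-!
With central dimension `0`, each of the three notions says that the nontrivial continua of `X`
are blown up by some iterate of `f`. A set of ε-dimension `0` is covered by pairwise disjoint open
sets of diameter `< ε`, so a connected subset of it lies in one of them: a continuum has
ε-dimension `0` exactly when ε exceeds its diameter. Conversely a compact set of positive
dimension contains a nontrivial continuum, because a compact totally disconnected set splits,
for every ε, into finitely many disjoint compact pieces of diameter `< ε`, whose small disjoint
thickenings witness ε-dimension `0`.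
-/

open Metric Set Filter Topology TopologicalSpace
open scoped Function

lemma hiter_eq_coe_zpow (f : X ≃ₜ X) (n : ℤ) : hiter f n = ⇑(f ^ n) := by
  have h := map_zpow (MonoidHom.mk' (fun g : X ≃ₜ X => g.toEquiv) fun _ _ => rfl) f n
  rw [hiter]
  exact congrArg DFunLike.coe h.symm

lemma continuous_hiter (f : X ≃ₜ X) (n : ℤ) : Continuous (hiter f n) := by
  rw [hiter_eq_coe_zpow]
  exact (f ^ n).continuous

lemma ordLE_zero_iff {α : Type*} {𝒰 : Set (Set α)} : OrdLE 𝒰 0 ↔ 𝒰.Pairwise Disjoint := by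
  classical
  constructor
  · intro h A hA B hB hAB
    have hpair := h {A, B} (by simp [insert_subset_iff, hA, hB]) (by simp [hAB])
    simpa [disjoint_iff_inter_eq_empty] using hpair
  · intro h 𝒱 h𝒱 hcard
    obtain ⟨A, hA, B, hB, hAB⟩ := Finset.one_lt_card.1 (by omega : 1 < 𝒱.card)
    refine subset_empty_iff.1 fun x hx => ?_
    exact disjoint_left.1 (h (h𝒱 hA) (h𝒱 hB) hAB) (hx A hA) (hx B hB)

lemma DimEpsLE.mono {Y Z : Set X} {ε : ℝ} {n : ℕ} (h : DimEpsLE Y ε n) (hZY : Z ⊆ Y) :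
    DimEpsLE Z ε n :=
  let ⟨𝒰, hopen, hcov, hmesh, hord⟩ := h
  ⟨𝒰, hopen, hZY.trans hcov, hmesh, hord⟩

lemma dimEps_pos_iff {Y : Set X} {ε : ℝ} : 0 < dimEps Y ε ↔ ¬ DimEpsLE Y ε 0 := by
  constructor
  · intro hpos h
    exact hpos.ne' (le_antisymm (sInf_le ⟨0, by simp, h⟩) bot_le)
  · intro h
    refine lt_of_lt_of_le zero_lt_one (le_sInf ?_)
    rintro d ⟨n, rfl, hn⟩
    obtain rfl | hn0 := Nat.eq_zero_or_pos n
    · exact absurd hn h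
    · exact_mod_cast hn0

lemma topDim_pos_iff {Y : Set X} : 0 < topDim Y ↔ ∃ ε, 0 < ε ∧ ¬ DimEpsLE Y ε 0 := by
  simp only [topDim, lt_iSup_iff, ← dimEps_pos_iff, exists_prop]

lemma dimGT_zero_iff {Y : Set X} : DimGT Y 0 ↔ 0 < topDim Y := by
  simp [DimGT]

lemma dimEpsLE_zero_of_diam_lt {Y : Set X} {ε : ℝ} (h : diam Y < ε) : DimEpsLE Y ε 0 := by
  obtain ⟨r, hr, hrε⟩ : ∃ r, 0 < r ∧ diam Y + 2 * r < ε :=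
    ⟨(ε - diam Y) / 4, by linarith, by linarith⟩
  refine ⟨{thickening r Y}, by simp [isOpen_thickening], ?_, ?_,
    ordLE_zero_iff.2 (pairwise_singleton _ _)⟩
  · simpa using self_subset_thickening hr Y
  · simp only [MeshLT, mem_singleton_iff, forall_eq]
    linarith [diam_thickening_le Y hr.le]

lemma dimEpsLE_zero_iUnion {ι : Type*} [Finite ι] {K : ι → Set X} {ε : ℝ}
    (hK : ∀ i, IsCompact (K i)) (hdisj : Pairwise (Disjoint on K)) (hdiam : ∀ i, diam (K i) < ε) :
    DimEpsLE (⋃ i, K i) ε 0 := by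
  have hsmall (i : ι) : ∀ᶠ r in 𝓝[>] (0 : ℝ), diam (K i) + 2 * r < ε := by
    have hgap : (0 : ℝ) < (ε - diam (K i)) / 2 := by linarith [hdiam i]
    filter_upwards [Ioo_mem_nhdsGT hgap] with r hr
    linarith [hr.2]
  have hsep (i j : ι) (hij : i ≠ j) :
      ∀ᶠ r in 𝓝[>] (0 : ℝ), Disjoint (thickening r (K i)) (thickening r (K j)) := by
    obtain ⟨δ, hδ, hδdisj⟩ := (hdisj hij).exists_thickenings (hK i) (hK j).isClosed
    filter_upwards [Ioo_mem_nhdsGT hδ] with r hr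
    exact hδdisj.mono (thickening_mono hr.2.le _) (thickening_mono hr.2.le _)
  obtain ⟨r, hr, hrsmall, hrsep⟩ := (eventually_mem_nhdsWithin.and ((eventually_all.2 hsmall).and
    (eventually_all.2 fun i => eventually_all.2 fun j =>
      eventually_imp_distrib_left.2 (hsep i j)))).exists
  refine ⟨range fun i => thickening r (K i), ?_, ?_, ?_,
    ordLE_zero_iff.2 (Pairwise.range_pairwise hrsep)⟩
  · rintro _ ⟨i, rfl⟩
    exact isOpen_thickening
  · rw [sUnion_range]
    exact iUnion_mono fun i => self_subset_thickening hr _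
  · rintro _ ⟨i, rfl⟩
    linarith [diam_thickening_le (K i) (le_of_lt hr), hrsmall i]

lemma IsCompact.exists_finite_disjoint_cover_of_isTotallyDisconnected {C : Set X}
    (hC : IsCompact C) (htd : IsTotallyDisconnected C) {ε : ℝ} (hε : 0 < ε) :
    ∃ (n : ℕ) (K : Fin n → Set X), (∀ i, IsCompact (K i)) ∧ Pairwise (Disjoint on K) ∧
      (∀ i, diam (K i) < ε) ∧ C ⊆ ⋃ i, K i := by
  have := isCompact_iff_compactSpace.1 hC
  have := totallyDisconnectedSpace_subtype_iff.2 htd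
  have hballs : IsOpenCover fun x : C => (⟨ball x (ε / 4), isOpen_ball⟩ : Opens C) :=
    .of_sets (fun _ => isOpen_ball)
      (eq_univ_of_forall fun x => mem_iUnion.2 ⟨x, mem_ball_self (by positivity)⟩)
  obtain ⟨n, W, hW, hWcov, hWdisj⟩ := hballs.exists_finite_nonempty_disjoint_clopen_cover
  refine ⟨n, fun j => Subtype.val '' (W j : Set C),
    fun j => (W j).isClopen.isClosed.isCompact.image continuous_subtype_val, ?_, fun j => ?_,
    fun y hy => ?_⟩
  · intro i j hij
    exact (disjoint_image_iff Subtype.val_injective).2 (Clopens.coe_disjoint.2 (hWdisj hij))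
  · obtain ⟨x, hx⟩ := (hW j).2
    have hsub : Subtype.val '' (W j : Set C) ⊆ ball (x : X) (ε / 4) := by
      rintro _ ⟨y, hy, rfl⟩
      exact hx hy
    linarith [(diam_mono hsub isBounded_ball).trans (diam_ball (x := (x : X)) (by positivity))]
  · obtain ⟨j, hj⟩ := mem_iUnion.1 (hWcov (mem_univ ⟨y, hy⟩))
    exact mem_iUnion.2 ⟨j, ⟨y, hy⟩, hj, rfl⟩

lemma IsCompact.dimEpsLE_zero_of_isTotallyDisconnected {C : Set X} (hC : IsCompact C)
    (htd : IsTotallyDisconnected C) {ε : ℝ} (hε : 0 < ε) : DimEpsLE C ε 0 := by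
  obtain ⟨n, K, hK, hdisj, hdiam, hcov⟩ :=
    hC.exists_finite_disjoint_cover_of_isTotallyDisconnected htd hε
  exact (dimEpsLE_zero_iUnion hK hdisj hdiam).mono hcov

lemma IsCompact.exists_nontrivial_continuum_of_topDim_pos {C : Set X} (hC : IsCompact C)
    (hdim : 0 < topDim C) :
    ∃ K ⊆ C, IsCompact K ∧ IsPreconnected K ∧ K.Nontrivial := by
  by_contra! hnone
  have htd : IsTotallyDisconnected C := by
    intro t htC ht
    have hcl : closure t ⊆ C := closure_minimal htC hC.isClosed
    exact (hnone _ hcl (hC.of_isClosed_subset isClosed_closure hcl) ht.closure).anti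
      subset_closure
  obtain ⟨ε, hε, hnot⟩ := topDim_pos_iff.1 hdim
  exact hnot (hC.dimEpsLE_zero_of_isTotallyDisconnected htd hε)

lemma IsPreconnected.exists_subset_of_pairwise_disjoint {α : Type*} [TopologicalSpace α]
    {S : Set α} {𝒰 : Set (Set α)} (hS : IsPreconnected S) (hne : S.Nonempty)
    (hopen : ∀ A ∈ 𝒰, IsOpen A) (hdisj : 𝒰.Pairwise Disjoint) (hcov : S ⊆ ⋃₀ 𝒰) :
    ∃ A ∈ 𝒰, S ⊆ A := by
  obtain ⟨x, hxS⟩ := hne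
  obtain ⟨A, hA, hxA⟩ := hcov hxS
  have hrest : IsOpen (⋃₀ (𝒰 \ {A})) := isOpen_sUnion fun B hB => hopen B hB.1
  have hdisjA : Disjoint A (⋃₀ (𝒰 \ {A})) :=
    disjoint_sUnion_right.2 fun B hB => hdisj hA hB.1 (Ne.symm hB.2)
  have hsplit : S ⊆ A ∪ ⋃₀ (𝒰 \ {A}) := by
    rwa [← sUnion_insert, insert_sdiff_singleton, insert_eq_of_mem hA]
  exact ⟨A, hA, (hS.subset_or_subset (hopen A hA) hrest hdisjA hsplit).resolve_right
    fun h => disjoint_left.1 hdisjA hxA (h hxS)⟩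

-- `diam` is `0` on unbounded sets, so a member of the cover could otherwise swallow `S`.
lemma IsPreconnected.not_dimEpsLE_zero [BoundedSpace X] {S : Set X} (hS : IsPreconnected S)
    (hne : S.Nonempty) {ε : ℝ} (hε : ε ≤ diam S) : ¬ DimEpsLE S ε 0 := by
  rintro ⟨𝒰, hopen, hcov, hmesh, hord⟩
  obtain ⟨A, hA, hSA⟩ :=
    hS.exists_subset_of_pairwise_disjoint hne hopen (ordLE_zero_iff.1 hord) hcov
  linarith [hmesh A hA, diam_mono hSA (Bornology.IsBounded.all A)]

lemma IsPreconnected.topDim_pos [BoundedSpace X] {C : Set X} (hC : IsPreconnected C)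
    (hnt : C.Nontrivial) : 0 < topDim C :=
  topDim_pos_iff.2 ⟨diam C, diam_pos hnt (Bornology.IsBounded.all C),
    hC.not_dimEpsLE_zero hnt.nonempty le_rfl⟩

section Expansivity

variable {f : X ≃ₜ X}

lemma DwExpansive.partiallyExpansive {σ : ℝ} (h : DwExpansive f 0 σ) :
    PartiallyExpansive f 0 σ := by
  intro C hC _ hdim
  obtain ⟨n, hn⟩ := h C hC (by exact_mod_cast dimGT_zero_iff.1 hdim)
  refine ⟨n, not_lt.1 fun hsmall => ?_⟩
  exact dimEps_pos_iff.1 (by exact_mod_cast hn) (dimEpsLE_zero_of_diam_lt hsmall)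

lemma PartiallyExpansive.cwExpansiveWith [BoundedSpace X] {ε : ℝ}
    (h : PartiallyExpansive f 0 ε) : CwExpansiveWith f ε := by
  intro C hC hconn hsmall
  by_contra hns
  have hnt : C.Nontrivial := by
    refine not_subsingleton_iff.1 fun hss => ?_
    obtain ⟨x, hx⟩ := hconn.nonempty
    exact hns ⟨x, hss.eq_singleton_of_mem hx⟩
  obtain ⟨k, hk⟩ := h C hC hnt (dimGT_zero_iff.2 (hconn.isPreconnected.topDim_pos hnt))
  exact (hsmall k).not_ge hk

lemma CwExpansiveWith.dwExpansive [BoundedSpace X] {δ : ℝ} (h : CwExpansiveWith f δ) :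
    DwExpansive f 0 δ := by
  intro C hC hdim
  obtain ⟨K, hKC, hK, hKconn, hKnt⟩ :=
    hC.exists_nontrivial_continuum_of_topDim_pos (by exact_mod_cast hdim)
  have hbig : ∃ n, δ ≤ diam (hiter f n '' K) := by
    by_contra! hall
    obtain ⟨x, rfl⟩ := h K hK ⟨hKnt.nonempty, hKconn⟩ hall
    exact not_nontrivial_singleton hKnt
  obtain ⟨n, hn⟩ := hbig
  refine ⟨n, ?_⟩
  have hKn : IsPreconnected (hiter f n '' K) :=
    hKconn.image _ (continuous_hiter f n).continuousOn
  have hnot := hKn.not_dimEpsLE_zero (hKnt.nonempty.image _) hn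
  exact_mod_cast dimEps_pos_iff.2 fun hC' => hnot (hC'.mono (image_mono hKC))

end Expansivity

/-- Equivalence of dw-expansivity with central dimension 0, partial expansivity
with central dimension 0, and cw-expansivity. -/
theorem dwExpansive_iff_partiallyExpansive_iff_cwExpansive {X : Type*}
    [MetricSpace X] [CompactSpace X] (f : X ≃ₜ X) :
    ((∃ σ : ℝ, 0 < σ ∧ DwExpansive f 0 σ) ↔
        (∃ ε : ℝ, 0 < ε ∧ PartiallyExpansive f 0 ε)) ∧
      ((∃ ε : ℝ, 0 < ε ∧ PartiallyExpansive f 0 ε) ↔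
        (∃ δ : ℝ, 0 < δ ∧ CwExpansiveWith f δ)) := by
  have dw_pe : (∃ σ : ℝ, 0 < σ ∧ DwExpansive f 0 σ) →
      ∃ ε : ℝ, 0 < ε ∧ PartiallyExpansive f 0 ε :=
    fun ⟨σ, hσ, h⟩ => ⟨σ, hσ, h.partiallyExpansive⟩
  have pe_cw : (∃ ε : ℝ, 0 < ε ∧ PartiallyExpansive f 0 ε) →
      ∃ δ : ℝ, 0 < δ ∧ CwExpansiveWith f δ :=
    fun ⟨ε, hε, h⟩ => ⟨ε, hε, h.cwExpansiveWith⟩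
  have cw_dw : (∃ δ : ℝ, 0 < δ ∧ CwExpansiveWith f δ) →
      ∃ σ : ℝ, 0 < σ ∧ DwExpansive f 0 σ :=
    fun ⟨δ, hδ, h⟩ => ⟨δ, hδ, h.dwExpansive⟩
  exact ⟨⟨dw_pe, cw_dw ∘ pe_cw⟩, ⟨pe_cw, dw_pe ∘ cw_dw⟩⟩
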